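/- arXiv:1904.10850 — 2 statements merged into one kernel-verified Lean document; each statement's English description precedes it below -/
import Mathlib

section
/- For every natural number s, the maximum cardinality of a finite set of cells of the integer grid in which any two cells are at Manhattan distance at most s equals the ceiling of (s+1)^2 / 2; that is, every such set has at most ceil((s+1)^2/2) cells, and some set of exactly ceil((s+1)^2/2) cells has all pairwise Manhattan distances at most s. -/
/-- Manhattan distance between two cells of the integer grid. -/
def mdist (p q : ℤ × ℤ) : ℕ := (p.1 - q.1).natAbs + (p.2 - q.2).natAbs

/-- The disc of radius `r` centered at `c`: all cells at Manhattan distance at most `r`. -/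
noncomputable def disc (r : ℕ) (c : ℤ × ℤ) : Finset (ℤ × ℤ) :=
  (Finset.Icc (c.1 - r, c.2 - r) (c.1 + r, c.2 + r)).filter (fun p => mdist p c ≤ r)

/-- The span of a finite set of cells: the maximum Manhattan distance between two of
its cells (`0` if the set has at most one cell). -/
def span (S : Finset (ℤ × ℤ)) : ℕ := (S ×ˢ S).sup fun pq => mdist pq.1 pq.2


/-!
In the rotated coordinates `u = x + y`, `v = x - y` the Manhattan distance becomes the
Chebyshev distance `max |Δu| |Δv|`, and the image of the grid is one colour class
`u ≡ v (mod 2)` of the checkerboard. A set of diameter at most `s` therefore lies in an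
`(s + 1) × (s + 1)` box and in one colour class, which has at most `⌈(s + 1)² / 2⌉` cells.
Conversely, a whole colour class of such a box is a set of diameter `s`; back in the
original coordinates it is the union of two tilted squares of sides `⌈(s + 1) / 2⌉` and
`⌊(s + 1) / 2⌋`.
-/

open Finset

/-- For odd `k` the colour of the cell with row-major index `n` is the parity of `n`; for even
`k` the colour changes at every step except across a row break, and a row break always starts
at an odd index. So two cells of one colour never share the same `n / 2`. -/
theorem eq_of_row_major_div_two_eq_of_le {k U V U' V' : ℕ} (hV : V < k) (hV' : V' < k)
    (hUU' : U ≤ U') (hcolour : (U + V) % 2 = (U' + V') % 2)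
    (h : (U * k + V) / 2 = (U' * k + V') / 2) : U = U' ∧ V = V' := by
  obtain rfl | hlt := hUU'.eq_or_lt
  · omega
  exfalso
  have hnext_row : U * k + k ≤ U' * k := by
    rw [← add_one_mul]
    exact Nat.mul_le_mul_right k hlt
  have hrow_break : U' * k = U * k + k ∧ V' = 0 ∧ V + 1 = k := by omega
  have hU' : U' = U + 1 :=
    Nat.eq_of_mul_eq_mul_right (Nat.zero_lt_of_lt hV) (by rw [hrow_break.1, add_one_mul])
  subst hU'
  obtain ⟨m, rfl⟩ : 2 ∣ k := by omega
  have hUk_even : U * (2 * m) = 2 * (U * m) := by ring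
  omega

theorem eq_of_row_major_div_two_eq {k U V U' V' : ℕ} (hV : V < k) (hV' : V' < k)
    (hcolour : (U + V) % 2 = (U' + V') % 2) (h : (U * k + V) / 2 = (U' * k + V') / 2) :
    U = U' ∧ V = V' := by
  rcases le_total U U' with hle | hle
  · exact eq_of_row_major_div_two_eq_of_le hV hV' hle hcolour h
  · exact (eq_of_row_major_div_two_eq_of_le hV' hV hle hcolour.symm h.symm).imp Eq.symm Eq.symm

theorem card_le_of_mem_square_of_parity_eq {k : ℕ} {T : Finset (ℕ × ℕ)}
    (hbound : ∀ p ∈ T, p.1 < k ∧ p.2 < k)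
    (hcolour : ∀ p ∈ T, ∀ q ∈ T, (p.1 + p.2) % 2 = (q.1 + q.2) % 2) :
    T.card ≤ (k ^ 2 + 1) / 2 := by
  let halfIndex : ℕ × ℕ → ℕ := fun p => (p.1 * k + p.2) / 2
  have hmaps : Set.MapsTo halfIndex T (range ((k ^ 2 + 1) / 2)) := by
    intro p hp
    obtain ⟨hU, hV⟩ := hbound p hp
    have hrows : p.1 * k + k ≤ k * k := by
      rw [← add_one_mul]
      exact Nat.mul_le_mul_right k hU
    simp only [halfIndex, coe_range, Set.mem_Iio, sq]
    omega
  have hinj : Set.InjOn halfIndex T := by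
    intro p hp q hq h
    obtain ⟨h1, h2⟩ := eq_of_row_major_div_two_eq (hbound p hp).2 (hbound q hq).2
      (hcolour p hp q hq) h
    exact Prod.ext h1 h2
  simpa using card_le_card_of_injOn _ hmaps hinj

theorem card_le_of_forall_mdist_le {s : ℕ} {S : Finset (ℤ × ℤ)}
    (hS : ∀ p ∈ S, ∀ q ∈ S, mdist p q ≤ s) : S.card ≤ ((s + 1) ^ 2 + 1) / 2 := by
  rcases S.eq_empty_or_nonempty with rfl | hne
  · simp
  obtain ⟨p₀, hp₀, ha⟩ := S.exists_min_image (fun p => p.1 + p.2) hne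
  obtain ⟨p₁, hp₁, hb⟩ := S.exists_min_image (fun p => p.1 - p.2) hne
  -- rotated coordinates, shifted so that their minima over `S` are `0`
  let g : ℤ × ℤ → ℕ × ℕ := fun p =>
    ((p.1 + p.2 - (p₀.1 + p₀.2)).toNat, (p.1 - p.2 - (p₁.1 - p₁.2)).toNat)
  have hinj : Set.InjOn g S := by
    intro p hp q hq h
    have := ha p hp; have := hb p hp; have := ha q hq; have := hb q hq
    simp only [g, Prod.ext_iff] at h ⊢
    omega
  rw [← card_image_of_injOn hinj]
  apply card_le_of_mem_square_of_parity_eq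
  · simp only [mem_image, forall_exists_index, and_imp]
    rintro _ p hp rfl
    have := hS p hp p₀ hp₀; have := hS p hp p₁ hp₁; have := ha p hp; have := hb p hp
    simp only [mdist, g] at *
    omega
  · simp only [mem_image, forall_exists_index, and_imp]
    rintro _ p hp rfl _ q hq rfl
    have := ha p hp; have := hb p hp; have := ha q hq; have := hb q hq
    simp only [g]
    omega

def tiltedSquare (m : ℕ) (c : ℤ × ℤ) : Finset (ℤ × ℤ) :=
  (range m ×ˢ range m).image fun ij => (c.1 + ij.1 + ij.2, c.2 + ij.1 - ij.2)

theorem mem_tiltedSquare {m : ℕ} {c p : ℤ × ℤ} :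
    p ∈ tiltedSquare m c ↔ ∃ i < m, ∃ j < m, p = (c.1 + i + j, c.2 + i - j) := by
  simp only [tiltedSquare, mem_image, mem_product, mem_range, Prod.exists]
  constructor
  · rintro ⟨i, j, ⟨hi, hj⟩, rfl⟩
    exact ⟨i, hi, j, hj, rfl⟩
  · rintro ⟨i, hi, j, hj, rfl⟩
    exact ⟨i, j, ⟨hi, hj⟩, rfl⟩

theorem card_tiltedSquare (m : ℕ) (c : ℤ × ℤ) : (tiltedSquare m c).card = m ^ 2 := by
  rw [tiltedSquare, card_image_of_injective, card_product, card_range, sq]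
  intro ij ij' h
  simp only [Prod.ext_iff] at h ⊢
  omega

theorem sq_add_one_div_two_add_sq_div_two (k : ℕ) :
    ((k + 1) / 2) ^ 2 + (k / 2) ^ 2 = (k ^ 2 + 1) / 2 := by
  rcases Nat.even_or_odd' k with ⟨r, rfl | rfl⟩
  · have h1 : (2 * r + 1) / 2 = r := by omega
    have h2 : (2 * r) ^ 2 + 1 = 2 * (2 * r ^ 2) + 1 := by ring
    rw [h1, Nat.mul_div_cancel_left _ two_pos, h2]
    omega
  · have h1 : (2 * r + 1 + 1) / 2 = r + 1 := by omega
    have h2 : (2 * r + 1) / 2 = r := by omega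
    have h3 : (2 * r + 1) ^ 2 + 1 = 2 * ((r + 1) ^ 2 + r ^ 2) := by ring
    rw [h1, h2, h3, Nat.mul_div_cancel_left _ two_pos]

theorem exists_card_eq_of_forall_mdist_le (s : ℕ) :
    ∃ S : Finset (ℤ × ℤ), (∀ p ∈ S, ∀ q ∈ S, mdist p q ≤ s) ∧
      S.card = ((s + 1) ^ 2 + 1) / 2 := by
  refine ⟨tiltedSquare ((s + 2) / 2) (0, 0) ∪ tiltedSquare ((s + 1) / 2) (1, 0), ?_, ?_⟩
  · intro p hp q hq
    simp only [mem_union, mem_tiltedSquare] at hp hq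
    rcases hp with ⟨i, hi, j, hj, rfl⟩ | ⟨i, hi, j, hj, rfl⟩ <;>
      rcases hq with ⟨i', hi', j', hj', rfl⟩ | ⟨i', hi', j', hj', rfl⟩ <;>
      · simp only [mdist]
        omega
  · have hdisj :
        Disjoint (tiltedSquare ((s + 2) / 2) (0, 0)) (tiltedSquare ((s + 1) / 2) (1, 0)) := by
      rw [disjoint_left]
      intro p hp hq
      rw [mem_tiltedSquare] at hp hq
      obtain ⟨i, -, j, -, rfl⟩ := hp
      obtain ⟨i', -, j', -, h⟩ := hq
      simp only [Prod.ext_iff] at h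
      omega
    rw [card_union_of_disjoint hdisj, card_tiltedSquare, card_tiltedSquare,
      ← sq_add_one_div_two_add_sq_div_two]

/-- The maximum cardinality of a finite set of cells with all pairwise Manhattan
distances at most `s` equals `⌈(s+1)²/2⌉ = ((s+1)² + 1) / 2`. -/
theorem max_card_of_pairwise_dist_le (s : ℕ) :
    (∀ S : Finset (ℤ × ℤ), (∀ p ∈ S, ∀ q ∈ S, mdist p q ≤ s) →
      S.card ≤ ((s + 1) ^ 2 + 1) / 2) ∧
    (∃ S : Finset (ℤ × ℤ), (∀ p ∈ S, ∀ q ∈ S, mdist p q ≤ s) ∧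
      S.card = ((s + 1) ^ 2 + 1) / 2) :=
  ⟨fun _ hS => card_le_of_forall_mdist_le hS, exists_card_eq_of_forall_mdist_le s⟩
end

section
/- For every natural number r, the union of the disc of radius r centered at (0,0) and the disc of radius r centered at (1,0) is a nest: it has cardinality 2(r+1)^2 and span 2r+1, and every finite set of cells of cardinality 2(r+1)^2 has span at least 2r+1. -/
/-!
In the rotated coordinates `u = x + y`, `v = x - y` (which satisfy `u ≡ v mod 2`) both
`|Δu|` and `|Δv|` are bounded by the Manhattan distance. A set of span `d` therefore lies
in a `(d+1) × (d+1)` square of the `(u, v)`-plane, where the parity constraint leaves room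
for at most `(d+1)(⌊d/2⌋+1)` cells; for `d = 2r` this is less than `2(r+1)²`. The union
of the two discs is, in the same coordinates, the parity-constrained part of
`[-r, r+1] × [-r, r+1]`, of exactly `(2r+2)(r+1)` cells.
-/

theorem mem_disc {r : ℕ} {c p : ℤ × ℤ} : p ∈ disc r c ↔ mdist p c ≤ r := by
  rw [disc, Finset.mem_filter, Finset.mem_Icc, Prod.le_def, Prod.le_def]
  simp only [mdist]
  omega

theorem mem_disc_union_disc {r : ℕ} {p : ℤ × ℤ} :
    p ∈ disc r (0, 0) ∪ disc r (1, 0) ↔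
      p.1.natAbs + p.2.natAbs ≤ r ∨ (p.1 - 1).natAbs + p.2.natAbs ≤ r := by
  simp [mem_disc, mdist]

theorem span_le_iff {S : Finset (ℤ × ℤ)} {d : ℕ} :
    span S ≤ d ↔ ∀ p ∈ S, ∀ q ∈ S, mdist p q ≤ d := by
  rw [span, Finset.sup_le_iff]
  exact ⟨fun h p hp q hq => h (p, q) (Finset.mem_product.2 ⟨hp, hq⟩),
    fun h pq hpq => h _ (Finset.mem_product.1 hpq).1 _ (Finset.mem_product.1 hpq).2⟩

theorem mdist_le_span {S : Finset (ℤ × ℤ)} {p q : ℤ × ℤ} (hp : p ∈ S) (hq : q ∈ S) :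
    mdist p q ≤ span S :=
  span_le_iff.1 le_rfl p hp q hq

theorem card_le_of_span_le {S : Finset (ℤ × ℤ)} {d : ℕ} (hS : span S ≤ d) :
    S.card ≤ (d + 1) * (d / 2 + 1) := by
  rcases S.eq_empty_or_nonempty with rfl | hne
  · simp
  obtain ⟨a, ha, ha_min⟩ := S.exists_min_image (fun p => p.1 + p.2) hne
  obtain ⟨b, hb, hb_min⟩ := S.exists_min_image (fun p => p.1 - p.2) hne
  have hd := span_le_iff.1 hS
  calc S.card
      ≤ (Finset.Icc (a.1 + a.2) (a.1 + a.2 + d) ×ˢ Finset.Icc (0 : ℤ) (d / 2 : ℕ)).card := by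
        refine Finset.card_le_card_of_injOn
          (fun p => (p.1 + p.2, (p.1 - p.2 - (b.1 - b.2)) / 2)) (fun p hp => ?_) ?_
        · have := ha_min p hp
          have := hb_min p hp
          have := hd p hp a ha
          have := hd p hp b hb
          simp only [mdist, Finset.coe_product, Set.mem_prod, Finset.coe_Icc,
            Set.mem_Icc] at *
          omega
        · intro p _ q _ h
          simp only [Prod.mk.injEq] at h
          ext <;> omega
    _ = (d + 1) * (d / 2 + 1) := by
        rw [Finset.card_product, Int.card_Icc, Int.card_Icc]
        congr 1
        omega

theorem card_disc_union_disc (r : ℕ) :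
    (disc r (0, 0) ∪ disc r (1, 0)).card = 2 * (r + 1) ^ 2 := by
  have hbij : (disc r (0, 0) ∪ disc r (1, 0)).card
      = (Finset.Icc (-(r : ℤ)) (r + 1) ×ˢ Finset.Icc (0 : ℤ) r).card := by
    -- `(x, y) ↦ (u, (v + r) / 2)`; the inverse recovers `v` from the parity of `u + r`.
    refine Finset.card_nbij' (fun p => (p.1 + p.2, (p.1 - p.2 + r) / 2))
      (fun q => ((q.1 + (2 * q.2 - r + (q.1 + r) % 2)) / 2,
                 (q.1 - (2 * q.2 - r + (q.1 + r) % 2)) / 2)) ?_ ?_ ?_ ?_ <;>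
    · intro p hp
      simp only [Finset.coe_product, Set.mem_prod, Finset.coe_Icc, Set.mem_Icc,
        Finset.mem_coe, mem_disc_union_disc, Prod.ext_iff] at hp ⊢
      omega
  rw [hbij, Finset.card_product, Int.card_Icc, Int.card_Icc]
  have h₁ : ((r : ℤ) + 1 + 1 - -(r : ℤ)).toNat = 2 * (r + 1) := by omega
  have h₂ : ((r : ℤ) + 1 - 0).toNat = r + 1 := by omega
  rw [h₁, h₂]
  ring

theorem span_disc_union_disc (r : ℕ) :
    span (disc r (0, 0) ∪ disc r (1, 0)) = 2 * r + 1 := by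
  refine le_antisymm (span_le_iff.2 fun p hp q hq => ?_) ?_
  · rw [mem_disc_union_disc] at hp hq
    simp only [mdist]
    omega
  · have hl : (-(r : ℤ), (0 : ℤ)) ∈ disc r (0, 0) ∪ disc r (1, 0) :=
      mem_disc_union_disc.2 (Or.inl (by simp))
    have hr : ((r : ℤ) + 1, (0 : ℤ)) ∈ disc r (0, 0) ∪ disc r (1, 0) :=
      mem_disc_union_disc.2 (Or.inr (by simp))
    have := mdist_le_span hl hr
    simp only [mdist] at this
    omega

/-- The union of the discs of radius `r` centered at `(0,0)` and `(1,0)` is a nest: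
it has `2(r+1)²` cells and span `2r + 1`, and every finite set of `2(r+1)²` cells has
span at least `2r + 1`. -/
theorem disc_union_is_nest (r : ℕ) :
    (disc r (0, 0) ∪ disc r (1, 0)).card = 2 * (r + 1) ^ 2 ∧
    span (disc r (0, 0) ∪ disc r (1, 0)) = 2 * r + 1 ∧
    (∀ S : Finset (ℤ × ℤ), S.card = 2 * (r + 1) ^ 2 → 2 * r + 1 ≤ span S) := by
  refine ⟨card_disc_union_disc r, span_disc_union_disc r, fun S hS => ?_⟩
  by_contra! hlt
  have hcard := card_le_of_span_le (Nat.le_of_lt_succ hlt)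
  rw [hS, show 2 * r / 2 = r by omega] at hcard
  nlinarith
end
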